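/- If a vector (x,y,z) is in the escape set ℰ = {|y|>1, |z|>1, |yz|>|x|}, then the third coordinate of vq(x,y,z) = (z,y,2yz−x) satisfies |2yz − x| > |yz| > |z|, and consequently the orbit under repeated application of vq diverges: the third coordinates grow strictly in absolute value at each step. -/
import Mathlib


/-- The escape set `ℰ = {(x,y,z) : |y| > 1, |z| > 1, |yz| > |x|}`. -/
def escapeSet : Set (ℝ × ℝ × ℝ) :=
  {v | 1 < |v.2.1| ∧ 1 < |v.2.2| ∧ |v.1| < |v.2.1 * v.2.2|}

/-- The map `vq(x,y,z) = (z,y,2yz−x)`. -/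
def vqMap : ℝ × ℝ × ℝ → ℝ × ℝ × ℝ :=
  fun v => (v.2.2, v.2.1, 2 * v.2.1 * v.2.2 - v.1)

/-- On the escape set, `|2yz − x| > |yz| > |z|`, and the third coordinates of the
`vq`-orbit grow strictly in absolute value at each step. -/
theorem escape_divergence (x y z : ℝ) (h : (x, y, z) ∈ escapeSet) :
    (|y * z| < |2 * y * z - x| ∧ |z| < |y * z|) ∧
    ∀ n : ℕ, |(vqMap^[n] (x, y, z)).2.2| < |(vqMap^[n + 1] (x, y, z)).2.2| := by
  have step : ∀ v : ℝ × ℝ × ℝ, v ∈ escapeSet →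
      vqMap v ∈ escapeSet ∧ |v.2.1 * v.2.2| < |(vqMap v).2.2| ∧ |v.2.2| < |v.2.1 * v.2.2| := by
    rintro ⟨a, b, c⟩ ⟨hb, hc, ha⟩
    simp only [escapeSet, vqMap, Set.mem_setOf_eq] at *
    have h1 : |2 * b * c| - |a| ≤ |2 * b * c - a| := abs_sub_abs_le_abs_sub _ _
    have h2 : |2 * b * c| = 2 * |b * c| := by
      rw [mul_assoc, abs_mul]; simp [abs_of_nonneg]
    have hbc : |b * c| < |2 * b * c - a| := by
      rw [h2] at h1; linarith
    have hcbc : |c| < |b * c| := by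
      rw [abs_mul]
      nlinarith [abs_nonneg c]
    refine ⟨⟨hb, lt_trans (lt_trans (by linarith [abs_nonneg c]) hcbc) hbc, ?_⟩, hbc, hcbc⟩
    rw [abs_mul]
    calc |c| < |2 * b * c - a| := lt_trans hcbc hbc
    _ ≤ |b| * |2 * b * c - a| := by
        nlinarith [abs_nonneg (2 * b * c - a)]
  have inv : ∀ n : ℕ, vqMap^[n] (x, y, z) ∈ escapeSet := by
    intro n
    induction n with
    | zero => exact h
    | succ k ih =>
      rw [Function.iterate_succ_apply']
      exact (step _ ih).1
  obtain ⟨_, hbc, hcbc⟩ := step _ h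
  refine ⟨⟨hbc, hcbc⟩, fun n => ?_⟩
  obtain ⟨_, h1, h2⟩ := step _ (inv n)
  rw [Function.iterate_succ_apply']
  exact lt_trans h2 h1
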